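/- arXiv:2509.25684 — 11 statements merged into one kernel-verified Lean document; each statement's English description precedes it below -/
import Mathlib

section
/- For every u ∈ ℝ^E, every real λ < 1, and every p ∈ ℝ^E, one has ‖p − u‖₂² − λ‖p‖₂² = (1 − λ)·‖p − u/(1 − λ)‖₂² − λ‖u‖₂²/(1 − λ); consequently, the Sparsegen routing output sparsegen(u, λ) equals the Euclidean (metric) projection of the point u/(1 − λ) onto the probability simplex Δ. -/
noncomputable section

/-- The probability simplex in `ℝ^E`. -/
def simplex (E : ℕ) : Set (EuclideanSpace ℝ (Fin E)) :=
  {p | (∀ i, 0 ≤ p i) ∧ ∑ i, p i = 1}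

/-- The Sparsegen objective `g_{u,λ}(p) = ‖p − u‖₂² − λ‖p‖₂²`. -/
def sparsegenObj {E : ℕ} (u : EuclideanSpace ℝ (Fin E)) (lam : ℝ)
    (p : EuclideanSpace ℝ (Fin E)) : ℝ :=
  ‖p - u‖ ^ 2 - lam * ‖p‖ ^ 2

/-! Completing the square turns the Sparsegen objective into a positive multiple of
`‖p − u/(1 − λ)‖²` plus a constant, and minimizing `a t² − c` with `a > 0` over
nonnegative values `t` is the same as minimizing `t`. -/

theorem norm_sub_sq_sub_mul_norm_sq {F : Type*} [NormedAddCommGroup F] [InnerProductSpace ℝ F]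
    (u p : F) {lam : ℝ} (hlam : lam ≠ 1) :
    ‖p - u‖ ^ 2 - lam * ‖p‖ ^ 2
      = (1 - lam) * ‖p - (1 - lam)⁻¹ • u‖ ^ 2 - lam * ‖u‖ ^ 2 / (1 - lam) := by
  have hne : 1 - lam ≠ 0 := sub_ne_zero.2 hlam.symm
  rw [norm_sub_sq_real, norm_sub_sq_real, real_inner_smul_right, norm_smul, mul_pow,
    Real.norm_eq_abs, sq_abs]
  field_simp
  ring

theorem IsMinOn.of_mul_sq_sub {α : Type*} {f : α → ℝ} {s : Set α} {p : α} {a c : ℝ}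
    (h : IsMinOn (fun x => a * f x ^ 2 - c) s p) (ha : 0 < a) (hf : ∀ x, 0 ≤ f x) :
    IsMinOn f s p := fun x hx => by
  have hpx : a * f p ^ 2 - c ≤ a * f x ^ 2 - c := h hx
  exact (pow_le_pow_iff_left₀ (hf p) (hf x) two_ne_zero).1
    (le_of_mul_le_mul_left (by linarith) ha)

theorem sparsegen_eq_projection_general (E : ℕ)
    (u : EuclideanSpace ℝ (Fin E)) (lam : ℝ) (hlam : lam < 1) :
    (∀ p : EuclideanSpace ℝ (Fin E),
        sparsegenObj u lam p
          = (1 - lam) * ‖p - (1 - lam)⁻¹ • u‖ ^ 2 - lam * ‖u‖ ^ 2 / (1 - lam)) ∧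
    (∀ p : EuclideanSpace ℝ (Fin E),
        p ∈ simplex E → IsMinOn (sparsegenObj u lam) (simplex E) p →
          IsMinOn (fun q => ‖q - (1 - lam)⁻¹ • u‖) (simplex E) p) := by
  have hobj (p : EuclideanSpace ℝ (Fin E)) :
      sparsegenObj u lam p
        = (1 - lam) * ‖p - (1 - lam)⁻¹ • u‖ ^ 2 - lam * ‖u‖ ^ 2 / (1 - lam) :=
    norm_sub_sq_sub_mul_norm_sq u p hlam.ne
  refine ⟨hobj, fun p _ hmin => ?_⟩
  rw [funext hobj] at hmin
  exact hmin.of_mul_sq_sub (sub_pos.2 hlam) fun q => norm_nonneg _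

/-- For every `u ∈ ℝ^E`, `λ < 1` and `p ∈ ℝ^E`, one has
`‖p − u‖² − λ‖p‖² = (1 − λ)‖p − u/(1 − λ)‖² − λ‖u‖²/(1 − λ)`; consequently the
Sparsegen routing output (the unique minimizer of the objective over the simplex)
is the Euclidean metric projection of `u/(1 − λ)` onto the simplex. -/
theorem sparsegen_eq_projection (E : ℕ) (hE : 1 ≤ E)
    (u : EuclideanSpace ℝ (Fin E)) (lam : ℝ) (hlam : lam < 1) :
    (∀ p : EuclideanSpace ℝ (Fin E),
        sparsegenObj u lam p
          = (1 - lam) * ‖p - (1 - lam)⁻¹ • u‖ ^ 2 - lam * ‖u‖ ^ 2 / (1 - lam)) ∧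
    (∀ p : EuclideanSpace ℝ (Fin E),
        p ∈ simplex E → IsMinOn (sparsegenObj u lam) (simplex E) p →
          IsMinOn (fun q => ‖q - (1 - lam)⁻¹ • u‖) (simplex E) p) :=
  sparsegen_eq_projection_general E u lam hlam
end
end

section
/- For every u ∈ ℝ^E and every real λ < 1, the threshold τ = (U_{k*} − 1 + λ)/k* satisfies u_(k*) > τ, and if k* < E then additionally u_(k*+1) ≤ τ. -/
noncomputable section

/-- `U k = Σ_{i=1}^{k} u_(i)` where `u_(i) = u (σ i)` are the sorted coordinates;
here `k : Fin E` corresponds to the paper's 1-based index `k + 1`. -/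
def sortedPartialSum {E : ℕ} (u : EuclideanSpace ℝ (Fin E)) (σ : Equiv.Perm (Fin E))
    (k : Fin E) : ℝ :=
  ∑ i ∈ Finset.Iic k, u (σ i)

/-- For every `u ∈ ℝ^E` and `λ < 1`, with `k*` the maximal index such that
`1 − λ + k·u_(k) > U_k` (0-based: `kstar : Fin E` corresponds to paper's `k* = kstar + 1`),
the threshold `τ = (U_{k*} − 1 + λ)/k*` satisfies `u_(k*) > τ`, and if `k* < E`
then additionally `u_(k*+1) ≤ τ`. -/
theorem kstar_threshold (E : ℕ) (hE : 1 ≤ E)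
    (u : EuclideanSpace ℝ (Fin E)) (σ : Equiv.Perm (Fin E))
    (hσ : Antitone fun i => u (σ i)) (lam : ℝ) (hlam : lam < 1)
    (kstar : Fin E)
    (hmem : 1 - lam + ((kstar : ℕ) + 1) * u (σ kstar) > sortedPartialSum u σ kstar)
    (hmax : ∀ k : Fin E,
      (1 - lam + ((k : ℕ) + 1) * u (σ k) > sortedPartialSum u σ k) → k ≤ kstar) :
    u (σ kstar) > (sortedPartialSum u σ kstar - 1 + lam) / ((kstar : ℕ) + 1) ∧
    ∀ h : (kstar : ℕ) + 1 < E,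
      u (σ ⟨(kstar : ℕ) + 1, h⟩)
        ≤ (sortedPartialSum u σ kstar - 1 + lam) / ((kstar : ℕ) + 1) := by
  have hkpos : (0:ℝ) < (kstar : ℕ) + 1 := by positivity
  constructor
  · rw [gt_iff_lt, div_lt_iff₀ hkpos]
    nlinarith [hmem]
  · intro h
    set k' : Fin E := ⟨(kstar : ℕ) + 1, h⟩ with hk'
    have hnot : ¬ (1 - lam + ((k' : ℕ) + 1) * u (σ k') > sortedPartialSum u σ k') := by
      intro hcon
      have := hmax k' hcon
      simp only [Fin.le_def, hk'] at this
      omega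
    push_neg at hnot
    have hsum : sortedPartialSum u σ k' = sortedPartialSum u σ kstar + u (σ k') := by
      unfold sortedPartialSum
      have : Finset.Iic k' = insert k' (Finset.Iic kstar) := by
        ext j
        simp only [Finset.mem_Iic, Finset.mem_insert, Fin.le_def, Fin.ext_iff, hk']
        omega
      rw [this, Finset.sum_insert (by simp [Finset.mem_Iic, Fin.le_def, hk'])]
      ring
    rw [le_div_iff₀ hkpos]
    have hk'val : ((k' : ℕ) : ℝ) = (kstar : ℕ) + 1 := by simp [hk']
    rw [hsum, hk'val] at hnot
    nlinarith [hnot]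
end
end

section
/- For every u ∈ ℝ^E and every real λ < 1, the vector p ∈ ℝ^E defined by p_i = max((u_i − τ)/(1 − λ), 0) lies in the probability simplex Δ: each p_i ≥ 0 and Σ_{i=1}^E p_i = 1. -/
noncomputable section

/-- For every `u ∈ ℝ^E` and `λ < 1`, with `k*` the maximal index such that
`1 − λ + k·u_(k) > U_k`, and `τ = (U_{k*} − 1 + λ)/k*`, the vector defined by
`p_i = max((u_i − τ)/(1 − λ), 0)` lies in the probability simplex:
each `p_i ≥ 0` and `Σ_i p_i = 1`. -/
theorem closed_form_mem_simplex (E : ℕ) (hE : 1 ≤ E)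
    (u : EuclideanSpace ℝ (Fin E)) (σ : Equiv.Perm (Fin E))
    (hσ : Antitone fun i => u (σ i)) (lam : ℝ) (hlam : lam < 1)
    (kstar : Fin E)
    (hmem : 1 - lam + ((kstar : ℕ) + 1) * u (σ kstar) > sortedPartialSum u σ kstar)
    (hmax : ∀ k : Fin E,
      (1 - lam + ((k : ℕ) + 1) * u (σ k) > sortedPartialSum u σ k) → k ≤ kstar)
    (τ : ℝ) (hτ : τ = (sortedPartialSum u σ kstar - 1 + lam) / ((kstar : ℕ) + 1)) :
    (∀ i : Fin E, 0 ≤ max ((u i - τ) / (1 - lam)) 0) ∧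
    (∑ i : Fin E, max ((u i - τ) / (1 - lam)) 0 = 1) := by
  have h1lam : (0:ℝ) < 1 - lam := by linarith
  have hkpos : (0:ℝ) < (kstar : ℕ) + 1 := by positivity
  have hτk : ((kstar : ℕ) + 1 : ℝ) * τ = sortedPartialSum u σ kstar - 1 + lam := by
    rw [hτ]; field_simp
  -- τ < u (σ kstar)
  have hgt : τ < u (σ kstar) := by
    have : ((kstar : ℕ) + 1 : ℝ) * τ < ((kstar : ℕ) + 1) * u (σ kstar) := by
      rw [hτk]; linarith [hmem]
    exact lt_of_mul_lt_mul_left this hkpos.le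
  -- For i > kstar: u (σ i) ≤ τ
  have hle : ∀ i : Fin E, kstar < i → u (σ i) ≤ τ := by
    intro i hi
    have hjlt : (kstar : ℕ) + 1 < E := lt_of_le_of_lt hi i.isLt
    set j : Fin E := ⟨(kstar : ℕ) + 1, hjlt⟩ with hj
    have hkj : kstar < j := by simp [hj, Fin.lt_def]
    have hji : j ≤ i := by simpa [hj, Fin.le_def] using hi
    have hnot : ¬ (1 - lam + ((j : ℕ) + 1) * u (σ j) > sortedPartialSum u σ j) := by
      intro h
      exact absurd (hmax j h) (not_le.mpr hkj)
    push_neg at hnot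
    have hIic : Finset.Iic j = insert j (Finset.Iic kstar) := by
      ext x
      simp only [Finset.mem_Iic, Finset.mem_insert, Fin.le_def, Fin.ext_iff, hj]
      omega
    have hsum : sortedPartialSum u σ j
        = u (σ j) + sortedPartialSum u σ kstar := by
      unfold sortedPartialSum
      rw [hIic, Finset.sum_insert (by simp [Finset.mem_Iic, Fin.le_def, hj])]
    have hjval : ((j : ℕ) : ℝ) = (kstar : ℕ) + 1 := by simp [hj]
    have huj : u (σ j) ≤ τ := by
      have h1 : ((kstar : ℕ) + 1 : ℝ) * u (σ j) ≤ ((kstar : ℕ) + 1) * τ := by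
        rw [hτk]
        have := hnot
        rw [hsum, hjval] at this
        nlinarith
      exact le_of_mul_le_mul_left h1 hkpos
    exact le_trans (hσ hji) huj
  refine ⟨fun i => le_max_right _ _, ?_⟩
  -- reindex by σ
  have hre : ∑ i : Fin E, max ((u i - τ) / (1 - lam)) 0
      = ∑ i : Fin E, max ((u (σ i) - τ) / (1 - lam)) 0 :=
    (Equiv.sum_comp σ (fun x => max ((u x - τ) / (1 - lam)) 0)).symm
  rw [hre]
  rw [← Finset.sum_add_sum_compl (Finset.Iic kstar)]
  have h2 : ∑ i ∈ (Finset.Iic kstar)ᶜ, max ((u (σ i) - τ) / (1 - lam)) 0 = 0 := by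
    apply Finset.sum_eq_zero
    intro i hi
    have hki : kstar < i := by
      simpa [Finset.mem_compl, Finset.mem_Iic, not_le] using hi
    have : (u (σ i) - τ) / (1 - lam) ≤ 0 := by
      apply div_nonpos_of_nonpos_of_nonneg _ h1lam.le
      linarith [hle i hki]
    exact max_eq_right this
  have h1 : ∑ i ∈ Finset.Iic kstar, max ((u (σ i) - τ) / (1 - lam)) 0
      = ∑ i ∈ Finset.Iic kstar, (u (σ i) - τ) / (1 - lam) := by
    apply Finset.sum_congr rfl
    intro i hi
    have hik : i ≤ kstar := Finset.mem_Iic.mp hi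
    have : τ ≤ u (σ i) := le_trans hgt.le (hσ hik)
    exact max_eq_left (div_nonneg (by linarith) h1lam.le)
  rw [h1, h2, add_zero]
  have hcard : (Finset.Iic kstar).card = (kstar : ℕ) + 1 := by
    simp
  rw [← Finset.sum_div, Finset.sum_sub_distrib, Finset.sum_const, hcard]
  have : ∑ i ∈ Finset.Iic kstar, u (σ i) = sortedPartialSum u σ kstar := rfl
  rw [this, nsmul_eq_mul]
  push_cast
  rw [div_eq_one_iff_eq (by linarith)]
  linarith [hτk]
end
end

section
/- (Closed-form Sparsegen routing) For every u ∈ ℝ^E and every real λ < 1, the unique minimizer of g_{u,λ}(p) = ‖p − u‖₂² − λ‖p‖₂² over the probability simplex Δ is given coordinatewise by p_i = max((u_i − τ)/(1 − λ), 0) for i = 1,…,E, where τ = (U_{k*} − 1 + λ)/k* and k* = max{k ∈ {1,…,E} : 1 − λ + k·u_(k) > U_k}. -/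
noncomputable section

/-!
Write `c = 1 - λ > 0`. Expanding the squares gives, for all `p, q`,
`g(p) = g(q) + c‖p - q‖² + 2⟪p - q, c q - u⟫`. If `q` satisfies the KKT conditions of the
simplex constraint, i.e. `r = c q - u + τ 𝟙 ≥ 0` with `q_i r_i = 0`, then on the simplex the
linear term equals `2⟪p, r⟫ ≥ 0`, so `g(p) ≥ g(q) + c‖p - q‖²`: `q` is the strict minimizer.
The thresholded vector `q = (u - τ)₊ / c` satisfies these conditions, and the choice of `k*`
makes `u_(i) > τ` exactly for `i ≤ k*`, which is what makes `∑ q_i = (U_{k*} - k* τ) / c = 1`.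
-/

open Finset

theorem isMinOn_and_eq_of_add_mul_dist_sq_le {X : Type*} [MetricSpace X] {f : X → ℝ}
    {s : Set X} {q : X} {c : ℝ} (hc : 0 < c) (hq : q ∈ s)
    (hgrowth : ∀ p ∈ s, f q + c * dist p q ^ 2 ≤ f p) :
    IsMinOn f s q ∧ ∀ p ∈ s, IsMinOn f s p → p = q := by
  refine ⟨fun p hp => (le_add_of_nonneg_right (by positivity)).trans (hgrowth p hp),
    fun p hp hmin => ?_⟩
  have hdist : c * dist p q ^ 2 ≤ 0 := by
    linarith [hgrowth p hp, show f p ≤ f q from hmin hq]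
  have : dist p q ^ 2 = 0 := le_antisymm (nonpos_of_mul_nonpos_right hdist hc) (sq_nonneg _)
  exact dist_eq_zero.1 (pow_eq_zero_iff two_ne_zero |>.1 this)

theorem sum_max_sub_zero_eq {ι : Type*} [Fintype ι] {v : ι → ℝ} {t : ℝ} {s : Finset ι}
    (hmem : ∀ i ∈ s, t ≤ v i) (hnot : ∀ i ∉ s, v i ≤ t) :
    ∑ i, max (v i - t) 0 = ∑ i ∈ s, v i - #s * t := by
  rw [← sum_subset (subset_univ s) fun i _ hi => max_eq_right (sub_nonpos.2 (hnot i hi)),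
    sum_congr rfl fun i hi => max_eq_left (sub_nonneg.2 (hmem i hi)), sum_sub_distrib,
    sum_const, nsmul_eq_mul]

theorem max_div_zero_complementary {a c : ℝ} (hc : 0 < c) :
    0 ≤ c * max (a / c) 0 - a ∧ max (a / c) 0 * (c * max (a / c) 0 - a) = 0 := by
  rcases le_or_gt a 0 with ha | ha
  · rw [max_eq_right (div_nonpos_of_nonpos_of_nonneg ha hc.le)]
    constructor <;> linarith
  · rw [max_eq_left (div_pos ha hc).le, mul_div_cancel₀ a hc.ne']
    simp

section Sparsegen

variable {E : ℕ} {u : EuclideanSpace ℝ (Fin E)}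

theorem sparsegenObj_eq_sum (lam : ℝ) (x : EuclideanSpace ℝ (Fin E)) :
    sparsegenObj u lam x = ∑ i, ((x i - u i) ^ 2 - lam * x i ^ 2) := by
  rw [sparsegenObj, EuclideanSpace.real_norm_sq_eq, EuclideanSpace.real_norm_sq_eq, mul_sum,
    ← sum_sub_distrib]
  rfl

theorem sparsegenObj_add_mul_dist_sq_le {lam τ : ℝ} {p q : EuclideanSpace ℝ (Fin E)}
    (hp : p ∈ simplex E) (hq : q ∈ simplex E)
    (hdual : ∀ i, 0 ≤ (1 - lam) * q i - u i + τ)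
    (hslack : ∀ i, q i * ((1 - lam) * q i - u i + τ) = 0) :
    sparsegenObj u lam q + (1 - lam) * dist p q ^ 2 ≤ sparsegenObj u lam p := by
  set r : Fin E → ℝ := fun i => (1 - lam) * q i - u i + τ
  have hexpand : ∀ i, (p i - u i) ^ 2 - lam * p i ^ 2 = ((q i - u i) ^ 2 - lam * q i ^ 2)
      + (1 - lam) * (p i - q i) ^ 2 + 2 * (p i * r i) - 2 * (q i * r i)
      - 2 * τ * (p i - q i) := fun i => by simp only [r]; ring
  have hdist : dist p q ^ 2 = ∑ i, (p i - q i) ^ 2 := by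
    simp only [EuclideanSpace.dist_sq_eq, Real.dist_eq, sq_abs]
  have hpr : 0 ≤ ∑ i, p i * r i := sum_nonneg fun i _ => mul_nonneg (hp.1 i) (hdual i)
  have hsum : sparsegenObj u lam p = sparsegenObj u lam q + (1 - lam) * dist p q ^ 2
      + 2 * ∑ i, p i * r i := by
    simp only [sparsegenObj_eq_sum, hexpand, sum_add_distrib, sum_sub_distrib, ← mul_sum,
      hdist, hslack, sum_const_zero, hp.2, hq.2, r]
    ring
  linarith

variable {σ : Equiv.Perm (Fin E)}

theorem sortedPartialSum_eq_add {k m : Fin E} (hm : (m : ℕ) = k + 1) :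
    sortedPartialSum u σ m = sortedPartialSum u σ k + u (σ m) := by
  have : Iic m = insert m (Iic k) := by
    ext j
    simp only [mem_Iic, mem_insert, Fin.le_def, Fin.ext_iff]
    omega
  rw [sortedPartialSum, sortedPartialSum, this, sum_insert (by simp [Fin.le_def, hm]), add_comm]

theorem threshold_lt_sorted_of_le {lam τ : ℝ} {k : Fin E} (hσ : Antitone fun i => u (σ i))
    (hk : 1 - lam + ((k : ℕ) + 1) * u (σ k) > sortedPartialSum u σ k)
    (hτ : ((k : ℕ) + 1) * τ = sortedPartialSum u σ k - 1 + lam) {i : Fin E} (hi : i ≤ k) :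
    τ < u (σ i) := by
  have : ((k : ℕ) + 1 : ℝ) * τ < ((k : ℕ) + 1) * u (σ k) := by linarith
  exact (lt_of_mul_lt_mul_left this (by positivity)).trans_le (hσ hi)

theorem sorted_le_threshold_of_lt {lam τ : ℝ} {k : Fin E} (hσ : Antitone fun i => u (σ i))
    (hmax : ∀ m : Fin E,
      (1 - lam + ((m : ℕ) + 1) * u (σ m) > sortedPartialSum u σ m) → m ≤ k)
    (hτ : ((k : ℕ) + 1) * τ = sortedPartialSum u σ k - 1 + lam) {i : Fin E} (hi : k < i) :
    u (σ i) ≤ τ := by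
  let m : Fin E := ⟨k + 1, by omega⟩
  have hm : (m : ℕ) = k + 1 := rfl
  have hnext : ¬ 1 - lam + ((m : ℕ) + 1) * u (σ m) > sortedPartialSum u σ m :=
    fun h => absurd (hmax m h) (by simp [Fin.le_def, hm])
  rw [sortedPartialSum_eq_add hm, hm] at hnext
  push_cast at hnext
  have : ((k : ℕ) + 1 : ℝ) * u (σ m) ≤ ((k : ℕ) + 1) * τ := by linarith
  exact (hσ (show m ≤ i by simp [Fin.le_def, hm]; omega)).trans
    (le_of_mul_le_mul_left this (by positivity))

end Sparsegen

theorem sparsegen_closed_form_general (E : ℕ)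
    (u : EuclideanSpace ℝ (Fin E)) (σ : Equiv.Perm (Fin E))
    (hσ : Antitone fun i => u (σ i)) (lam : ℝ) (hlam : lam < 1)
    (kstar : Fin E)
    (hmem : 1 - lam + ((kstar : ℕ) + 1) * u (σ kstar) > sortedPartialSum u σ kstar)
    (hmax : ∀ k : Fin E,
      (1 - lam + ((k : ℕ) + 1) * u (σ k) > sortedPartialSum u σ k) → k ≤ kstar)
    (τ : ℝ) (hτ : τ = (sortedPartialSum u σ kstar - 1 + lam) / ((kstar : ℕ) + 1))
    (q : EuclideanSpace ℝ (Fin E)) (hq : ∀ i, q i = max ((u i - τ) / (1 - lam)) 0) :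
    (q ∈ simplex E ∧ IsMinOn (sparsegenObj u lam) (simplex E) q) ∧
    ∀ p : EuclideanSpace ℝ (Fin E),
      p ∈ simplex E → IsMinOn (sparsegenObj u lam) (simplex E) p → p = q := by
  have hc : 0 < 1 - lam := sub_pos.2 hlam
  have hτ' : ((kstar : ℕ) + 1) * τ = sortedPartialSum u σ kstar - 1 + lam := by
    rw [hτ]; field_simp
  have hkkt i := max_div_zero_complementary (a := u i - τ) hc
  have hsupport : ∑ i, max (u i - τ) 0 = 1 - lam := by
    rw [← Equiv.sum_comp σ, sum_max_sub_zero_eq (s := Iic kstar)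
      (fun i hi => (threshold_lt_sorted_of_le hσ hmem hτ' (mem_Iic.1 hi)).le)
      (fun i hi => sorted_le_threshold_of_lt hσ hmax hτ' (not_le.1 (mem_Iic.not.1 hi))),
      Fin.card_Iic, ← sortedPartialSum]
    push_cast
    linarith
  have hqsimplex : q ∈ simplex E := by
    refine ⟨fun i => hq i ▸ le_max_right _ _, ?_⟩
    have hdiv i : max ((u i - τ) / (1 - lam)) 0 = max (u i - τ) 0 / (1 - lam) := by
      rw [← max_div_div_right hc.le, zero_div]
    simp only [hq, hdiv, ← sum_div, hsupport, div_self hc.ne']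
  have hmin := isMinOn_and_eq_of_add_mul_dist_sq_le hc hqsimplex fun p hp =>
    sparsegenObj_add_mul_dist_sq_le (τ := τ) hp hqsimplex
      (fun i => by simpa only [hq, sub_add] using (hkkt i).1)
      (fun i => by simpa only [hq, sub_add] using (hkkt i).2)
  exact ⟨⟨hqsimplex, hmin.1⟩, hmin.2⟩

/-- Closed-form Sparsegen routing: for every `u ∈ ℝ^E` and `λ < 1`, the unique
minimizer of `g_{u,λ}` over the probability simplex is given coordinatewise by
`p_i = max((u_i − τ)/(1 − λ), 0)`, where `τ = (U_{k*} − 1 + λ)/k*` and `k*` is the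
maximal index with `1 − λ + k·u_(k) > U_k`. -/
theorem sparsegen_closed_form (E : ℕ) (hE : 1 ≤ E)
    (u : EuclideanSpace ℝ (Fin E)) (σ : Equiv.Perm (Fin E))
    (hσ : Antitone fun i => u (σ i)) (lam : ℝ) (hlam : lam < 1)
    (kstar : Fin E)
    (hmem : 1 - lam + ((kstar : ℕ) + 1) * u (σ kstar) > sortedPartialSum u σ kstar)
    (hmax : ∀ k : Fin E,
      (1 - lam + ((k : ℕ) + 1) * u (σ k) > sortedPartialSum u σ k) → k ≤ kstar)
    (τ : ℝ) (hτ : τ = (sortedPartialSum u σ kstar - 1 + lam) / ((kstar : ℕ) + 1))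
    (q : EuclideanSpace ℝ (Fin E)) (hq : ∀ i, q i = max ((u i - τ) / (1 - lam)) 0) :
    (q ∈ simplex E ∧ IsMinOn (sparsegenObj u lam) (simplex E) q) ∧
    ∀ p : EuclideanSpace ℝ (Fin E),
      p ∈ simplex E → IsMinOn (sparsegenObj u lam) (simplex E) p → p = q :=
  sparsegen_closed_form_general E u σ hσ lam hlam kstar hmem hmax τ hτ q hq
end
end

section
/- For every u ∈ ℝ^E and every real λ < 1, there exists a unique real number t such that Σ_{i=1}^E max(u_i − t, 0) = 1 − λ, and this t equals (U_{k*} − 1 + λ)/k*, where k* = max{k ∈ {1,…,E} : 1 − λ + k·u_(k) > U_k}. -/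
noncomputable section

/-- For every `u ∈ ℝ^E` and `λ < 1`, there exists a unique real `t` with
`Σ_i max(u_i − t, 0) = 1 − λ`, and this `t` equals `(U_{k*} − 1 + λ)/k*`, where
`k*` is the maximal index with `1 − λ + k·u_(k) > U_k`. -/
theorem waterfilling_threshold (E : ℕ) (hE : 1 ≤ E)
    (u : EuclideanSpace ℝ (Fin E)) (σ : Equiv.Perm (Fin E))
    (hσ : Antitone fun i => u (σ i)) (lam : ℝ) (hlam : lam < 1)
    (kstar : Fin E)
    (hmem : 1 - lam + ((kstar : ℕ) + 1) * u (σ kstar) > sortedPartialSum u σ kstar)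
    (hmax : ∀ k : Fin E,
      (1 - lam + ((k : ℕ) + 1) * u (σ k) > sortedPartialSum u σ k) → k ≤ kstar) :
    (∃! t : ℝ, ∑ i : Fin E, max (u i - t) 0 = 1 - lam) ∧
    (∑ i : Fin E,
        max (u i - (sortedPartialSum u σ kstar - 1 + lam) / ((kstar : ℕ) + 1)) 0
      = 1 - lam) := by
  set t := (sortedPartialSum u σ kstar - 1 + lam) / ((kstar : ℕ) + 1) with ht
  have hkpos : (0:ℝ) < (kstar : ℕ) + 1 := by positivity
  have htlt : t < u (σ kstar) := by
    rw [ht, div_lt_iff₀ hkpos]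
    nlinarith [hmem]
  have hle : ∀ i : Fin E, kstar < i → u (σ i) ≤ t := by
    intro i hi
    have hiv : (kstar : ℕ) < (i : ℕ) := hi
    have hsE : (kstar : ℕ) + 1 < E := lt_of_le_of_lt hiv i.isLt
    set j : Fin E := ⟨(kstar : ℕ) + 1, hsE⟩ with hj
    have hji : j ≤ i := by simp only [Fin.le_def, hj]; omega
    have h1 : u (σ i) ≤ u (σ j) := hσ hji
    have hIic : Finset.Iic j = insert j (Finset.Iic kstar) := by
      ext x
      simp only [Finset.mem_Iic, Finset.mem_insert, Fin.le_def, Fin.ext_iff, hj]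
      omega
    have hnot : ¬ (1 - lam + ((j : ℕ) + 1) * u (σ j) > sortedPartialSum u σ j) := by
      intro h
      have := hmax j h
      rw [Fin.le_def] at this
      simp [hj] at this
    push_neg at hnot
    have hU : sortedPartialSum u σ j = u (σ j) + sortedPartialSum u σ kstar := by
      rw [sortedPartialSum, hIic, Finset.sum_insert (by
        simp only [Finset.mem_Iic, Fin.le_def, hj]; omega)]
      rfl
    have hjv : ((j : ℕ) : ℝ) = (kstar : ℕ) + 1 := by simp [hj]
    rw [hU, hjv] at hnot
    have hjt : u (σ j) ≤ t := by
      rw [ht, le_div_iff₀ hkpos]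
      nlinarith [hnot]
    linarith
  have hsum : ∑ i : Fin E, max (u i - t) 0 = 1 - lam := by
    have h1 : ∑ i : Fin E, max (u i - t) 0 = ∑ i : Fin E, max (u (σ i) - t) 0 :=
      (Equiv.sum_comp σ fun i => max (u i - t) 0).symm
    rw [h1, ← Finset.sum_add_sum_compl (Finset.Iic kstar)]
    have h2 : ∑ i ∈ Finset.Iic kstar, max (u (σ i) - t) 0
        = ∑ i ∈ Finset.Iic kstar, (u (σ i) - t) := by
      apply Finset.sum_congr rfl
      intro i hi
      have hti : t ≤ u (σ i) := le_trans htlt.le (hσ (Finset.mem_Iic.mp hi))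
      exact max_eq_left (by linarith)
    have h3 : ∑ i ∈ (Finset.Iic kstar)ᶜ, max (u (σ i) - t) 0 = 0 := by
      apply Finset.sum_eq_zero
      intro i hi
      have hik : kstar < i := by
        simp only [Finset.mem_compl, Finset.mem_Iic, not_le] at hi
        exact hi
      exact max_eq_right (by linarith [hle i hik])
    have hcard : (Finset.Iic kstar).card = (kstar : ℕ) + 1 := by
      exact Fin.card_Iic kstar
    rw [h2, h3, Finset.sum_sub_distrib, Finset.sum_const, hcard, ← sortedPartialSum]
    have : ((kstar : ℕ) + 1 : ℝ) * t = sortedPartialSum u σ kstar - 1 + lam := by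
      rw [ht]; field_simp
    push_cast [nsmul_eq_mul]
    linarith [this]
  refine ⟨⟨t, hsum, ?_⟩, hsum⟩
  intro y hy
  by_contra hne
  rcases lt_or_gt_of_ne hne with h | h
  · have hlt : ∑ i : Fin E, max (u i - t) 0 < ∑ i : Fin E, max (u i - y) 0 := by
      apply Finset.sum_lt_sum
      · intro i _
        exact max_le_max (by linarith) le_rfl
      · refine ⟨σ kstar, Finset.mem_univ _, ?_⟩
        rw [max_eq_left (by linarith), max_eq_left (by linarith)]
        linarith
    linarith
  · have hlt : ∑ i : Fin E, max (u i - y) 0 < ∑ i : Fin E, max (u i - t) 0 := by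
      apply Finset.sum_lt_sum
      · intro i _
        exact max_le_max (by linarith) le_rfl
      · refine ⟨σ kstar, Finset.mem_univ _, ?_⟩
        rw [max_eq_left (show (0:ℝ) ≤ u (σ kstar) - t by linarith)]
        exact max_lt (by linarith) (by linarith)
    linarith
end
end

section
/- (k-expert activation, sufficiency) Let u ∈ ℝ^E with E ≥ 2, let 1 ≤ k ≤ E − 1, and let λ < 1 satisfy 1 − (U_k − k·u_(k+1)) ≤ λ < 1 − (U_k − k·u_(k)). Then the Sparsegen routing output p* = sparsegen(u, λ) satisfies p*_{σ(i)} > 0 for all i ≤ k and p*_{σ(i)} = 0 for all i > k; that is, exactly the k experts with the largest scores are activated. -/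
/-!
For `λ < 1` the Sparsegen objective is `(1 - λ) ‖p - z‖² + const` with `z = u / (1 - λ)`, so
`sparsegen(u, λ)` is the Euclidean projection of `z` onto the simplex. For any threshold `τ` with
`∑ⱼ (zⱼ - τ)₊ = 1`, the vector `q = (z - τ)₊` satisfies `⟪p - q, q - z⟫ ≥ 0` on the simplex, hence
`‖q - z‖² + ‖p - q‖² ≤ ‖p - z‖²`, and `q` is the projection. The two bounds on `λ` say exactly that
`τ = (U_k - (1 - λ)) / (k (1 - λ))` separates the `k` largest coordinates of `z` from the others,
and then `∑ⱼ (zⱼ - τ)₊ = U_k / (1 - λ) - k τ = 1`.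
-/

noncomputable section

section PosPartShift

variable {ι : Type*}

def posPartShift (z : EuclideanSpace ℝ ι) (τ : ℝ) : EuclideanSpace ℝ ι :=
  WithLp.toLp 2 fun j => max (z j - τ) 0

@[simp]
lemma posPartShift_apply (z : EuclideanSpace ℝ ι) (τ : ℝ) (j : ι) :
    posPartShift z τ j = max (z j - τ) 0 := rfl

variable [Fintype ι]

lemma inner_sub_posPartShift_nonneg {z p : EuclideanSpace ℝ ι} {τ : ℝ} (hp : ∀ j, 0 ≤ p j)
    (hsum : ∑ j, p j = ∑ j, posPartShift z τ j) :
    0 ≤ inner ℝ (p - posPartShift z τ) (posPartShift z τ - z) := by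
  set q := posPartShift z τ
  -- `q j - z j + τ = (τ - z j)₊`, and where this is positive, `q j = 0 ≤ p j`.
  have hterm : ∀ j, -τ * (p j - q j) ≤ (p j - q j) * (q j - z j) := by
    intro j
    rcases le_total (z j) τ with h | h
    · simp only [q, posPartShift_apply, max_eq_right (sub_nonpos.2 h)]
      nlinarith [hp j]
    · simp only [q, posPartShift_apply, max_eq_left (sub_nonneg.2 h)]
      linarith
  calc (0 : ℝ) = ∑ j, -τ * (p j - q j) := by
        rw [← Finset.mul_sum, Finset.sum_sub_distrib, hsum, sub_self, mul_zero]
    _ ≤ ∑ j, (p j - q j) * (q j - z j) := Finset.sum_le_sum fun j _ => hterm j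
    _ = inner ℝ (p - q) (q - z) := by simp [PiLp.inner_apply, mul_comm]

lemma norm_posPartShift_sub_sq_add_le {z p : EuclideanSpace ℝ ι} {τ : ℝ} (hp : ∀ j, 0 ≤ p j)
    (hsum : ∑ j, p j = ∑ j, posPartShift z τ j) :
    ‖posPartShift z τ - z‖ ^ 2 + ‖p - posPartShift z τ‖ ^ 2 ≤ ‖p - z‖ ^ 2 := by
  have h := norm_add_sq_real (p - posPartShift z τ) (posPartShift z τ - z)
  rw [sub_add_sub_cancel] at h
  linarith [inner_sub_posPartShift_nonneg hp hsum]

end PosPartShift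

lemma Finset.sum_max_sub_eq {ι : Type*} [Fintype ι] [DecidableEq ι] {w : ι → ℝ} {τ : ℝ}
    {s : Finset ι} (hlt : ∀ i ∈ s, τ < w i) (hle : ∀ i ∉ s, w i ≤ τ) :
    ∑ i, max (w i - τ) 0 = ∑ i ∈ s, w i - s.card * τ := by
  rw [← Finset.sum_add_sum_compl s,
    Finset.sum_congr rfl fun i hi => max_eq_left (sub_nonneg.2 (hlt i hi).le),
    Finset.sum_congr rfl fun i hi => max_eq_right (sub_nonpos.2 (hle i (Finset.mem_compl.1 hi)))]
  simp [Finset.sum_sub_distrib]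

lemma sparsegenObj_eq {E : ℕ} (u p : EuclideanSpace ℝ (Fin E)) {lam : ℝ} (hlam : lam ≠ 1) :
    sparsegenObj u lam p =
      (1 - lam) * ‖p - (1 - lam)⁻¹ • u‖ ^ 2 + (1 - (1 - lam)⁻¹) * ‖u‖ ^ 2 := by
  have hc : 1 - lam ≠ 0 := sub_ne_zero.2 hlam.symm
  rw [sparsegenObj, norm_sub_sq_real, norm_sub_sq_real, inner_smul_right, norm_smul,
    Real.norm_eq_abs, mul_pow, sq_abs]
  field_simp
  ring

lemma eq_posPartShift_of_isMinOn {E : ℕ} {u p : EuclideanSpace ℝ (Fin E)} {lam τ : ℝ}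
    (hlam : lam < 1) (hq : posPartShift ((1 - lam)⁻¹ • u) τ ∈ simplex E) (hp : p ∈ simplex E)
    (hmin : IsMinOn (sparsegenObj u lam) (simplex E) p) :
    p = posPartShift ((1 - lam)⁻¹ • u) τ := by
  set q := posPartShift ((1 - lam)⁻¹ • u) τ
  have hle : ‖p - (1 - lam)⁻¹ • u‖ ^ 2 ≤ ‖q - (1 - lam)⁻¹ • u‖ ^ 2 := by
    have h := isMinOn_iff.1 hmin q hq
    rw [sparsegenObj_eq _ _ hlam.ne, sparsegenObj_eq _ _ hlam.ne] at h
    exact le_of_mul_le_mul_left (by linarith) (sub_pos.2 hlam)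
  have hpyth := norm_posPartShift_sub_sq_add_le hp.1 (hp.2.trans hq.2.symm)
  rw [← sub_eq_zero, ← norm_eq_zero]
  nlinarith [norm_nonneg (p - q)]

/-- Indices are 0-based: the paper's `u_(k)` is `u (σ ⟨k-1,_⟩)` and
`U_k = Σ_{i ≤ k-1} u (σ i)`. -/
theorem k_expert_activation_sufficiency (E : ℕ)
    (u : EuclideanSpace ℝ (Fin E)) (σ : Equiv.Perm (Fin E))
    (hσ : Antitone fun i => u (σ i))
    (k : ℕ) (hk1 : 1 ≤ k) (hk2 : k ≤ E - 1) (lam : ℝ) (hlam : lam < 1)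
    (hlow : 1 - ((∑ i ∈ Finset.Iic (⟨k - 1, by omega⟩ : Fin E), u (σ i))
        - k * u (σ ⟨k, by omega⟩)) ≤ lam)
    (hhigh : lam < 1 - ((∑ i ∈ Finset.Iic (⟨k - 1, by omega⟩ : Fin E), u (σ i))
        - k * u (σ ⟨k - 1, by omega⟩)))
    (p : EuclideanSpace ℝ (Fin E)) (hp : p ∈ simplex E)
    (hmin : IsMinOn (sparsegenObj u lam) (simplex E) p) :
    (∀ i : Fin E, (i : ℕ) < k → 0 < p (σ i)) ∧
    (∀ i : Fin E, k ≤ (i : ℕ) → p (σ i) = 0) := by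
  set c := 1 - lam
  have hc : 0 < c := sub_pos.2 hlam
  have hk : (0 : ℝ) < k := by exact_mod_cast hk1
  set s := Finset.Iic (⟨k - 1, by omega⟩ : Fin E)
  set U := ∑ i ∈ s, u (σ i)
  set τ := (U - c) / (k * c)
  have hτ : k * (c * τ) = U - c := by
    rw [← mul_assoc]; exact mul_div_cancel₀ _ (by positivity)
  have hτ_lt : ∀ i ∈ s, τ < (c⁻¹ • u) (σ i) := fun i hi => by
    have hσi := hσ (Finset.mem_Iic.1 hi)
    rw [PiLp.smul_apply, smul_eq_mul, lt_inv_mul_iff₀ hc]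
    nlinarith
  have hτ_ge : ∀ i ∉ s, (c⁻¹ • u) (σ i) ≤ τ := fun i hi => by
    have hσi := hσ (show (⟨k, by omega⟩ : Fin E) ≤ i by simp [s, Fin.le_def] at hi ⊢; omega)
    rw [PiLp.smul_apply, smul_eq_mul, inv_mul_le_iff₀ hc]
    nlinarith
  have hq : posPartShift (c⁻¹ • u) τ ∈ simplex E := by
    refine ⟨fun j => le_max_right _ _, ?_⟩
    rw [← Equiv.sum_comp σ]
    simp only [posPartShift_apply]
    rw [Finset.sum_max_sub_eq hτ_lt hτ_ge, Fin.card_Iic]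
    simp only [PiLp.smul_apply, smul_eq_mul, ← Finset.mul_sum, Nat.sub_add_cancel hk1]
    field_simp
    linarith
  obtain rfl := eq_posPartShift_of_isMinOn hlam hq hp hmin
  refine ⟨fun i hi => ?_, fun i hi => ?_⟩
  · simpa using hτ_lt i (by simp [s, Fin.le_def]; omega)
  · simpa using hτ_ge i (by simp [s, Fin.le_def]; omega)
end
end

section
/- (Explicit formula under full activation) Let u ∈ ℝ^E and let λ < 1 − (U_E − E·u_(E)). Then the Sparsegen routing output p* = sparsegen(u, λ) is given coordinatewise by p*_i = 1/E + (u_i − U_E/E)/(1 − λ) for every i ∈ {1,…,E}. -/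
/-!
Let `q = 1/E + (u − U_E/E)/(1 − λ)`. Expanding the objective,
`g(p) − g(q) = (1 − λ)‖p − q‖² + 2⟨p − q, (1 − λ)q − u⟩`, and `(1 − λ)q − u` is a constant
vector, so the inner product vanishes whenever `p` and `q` have the same coordinate sum.
Hence `q` is the strict minimizer on the hyperplane `Σ pᵢ = 1`, and the full activation
condition `λ < 1 − (U_E − E·u_(E))` is exactly what makes `q` nonnegative, i.e. lie in the
simplex.
-/

noncomputable section

open Finset

namespace Sparsegen

variable {E : ℕ}

theorem sparsegenObj_sub_sparsegenObj (u : EuclideanSpace ℝ (Fin E)) (lam : ℝ)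
    (p q : EuclideanSpace ℝ (Fin E)) :
    sparsegenObj u lam p - sparsegenObj u lam q =
      (1 - lam) * ‖p - q‖ ^ 2 + 2 * inner ℝ (p - q) ((1 - lam) • q - u) := by
  simp only [sparsegenObj, norm_sub_sq_real, inner_sub_left, inner_sub_right, inner_smul_right,
    real_inner_self_eq_norm_sq, real_inner_comm q p]
  ring

theorem inner_sub_eq_zero_of_sum_eq {x y v : EuclideanSpace ℝ (Fin E)} {c : ℝ}
    (hsum : ∑ i, x i = ∑ i, y i) (hv : ∀ i, v i = c) : inner ℝ (x - y) v = 0 := by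
  simp only [PiLp.inner_apply, RCLike.inner_apply, conj_trivial, hv, PiLp.sub_apply,
    ← mul_sum, sum_sub_distrib, hsum, sub_self, mul_zero]

theorem eq_of_isMinOn_sparsegenObj {u p q : EuclideanSpace ℝ (Fin E)} {lam c : ℝ}
    (hlam : lam < 1) (hq : q ∈ simplex E) (hconst : ∀ i, ((1 - lam) • q - u) i = c)
    (hp : p ∈ simplex E) (hmin : IsMinOn (sparsegenObj u lam) (simplex E) p) : p = q := by
  have horth : inner ℝ (p - q) ((1 - lam) • q - u) = 0 :=
    inner_sub_eq_zero_of_sum_eq (hp.2.trans hq.2.symm) hconst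
  have hdiff := sparsegenObj_sub_sparsegenObj u lam p q
  have hle : sparsegenObj u lam p ≤ sparsegenObj u lam q := hmin hq
  have hsq : ‖p - q‖ ^ 2 = 0 := by
    rw [horth] at hdiff
    nlinarith [sq_nonneg ‖p - q‖]
  simpa [sub_eq_zero] using hsq

def fullActivation (u : EuclideanSpace ℝ (Fin E)) (lam : ℝ) : EuclideanSpace ℝ (Fin E) :=
  WithLp.toLp 2 fun i => 1 / E + (u i - (∑ j, u j) / E) / (1 - lam)

theorem fullActivation_apply (u : EuclideanSpace ℝ (Fin E)) (lam : ℝ) (i : Fin E) :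
    fullActivation u lam i = 1 / E + (u i - (∑ j, u j) / E) / (1 - lam) :=
  rfl

theorem smul_fullActivation_sub_apply {lam : ℝ} (hlam : lam ≠ 1) (u : EuclideanSpace ℝ (Fin E))
    (i : Fin E) : ((1 - lam) • fullActivation u lam - u) i = (1 - lam - ∑ j, u j) / E := by
  have : 1 - lam ≠ 0 := sub_ne_zero.mpr (Ne.symm hlam)
  simp only [PiLp.sub_apply, PiLp.smul_apply, smul_eq_mul, fullActivation_apply]
  field_simp
  ring

theorem sum_fullActivation (hE : E ≠ 0) {lam : ℝ} (hlam : lam ≠ 1)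
    (u : EuclideanSpace ℝ (Fin E)) : ∑ i, fullActivation u lam i = 1 := by
  have : 1 - lam ≠ 0 := sub_ne_zero.mpr (Ne.symm hlam)
  simp only [fullActivation_apply, sum_add_distrib, ← sum_div,
    sum_sub_distrib, sum_const, card_univ, Fintype.card_fin, nsmul_eq_mul]
  field_simp
  ring

theorem sum_sub_card_mul_nonneg {u : EuclideanSpace ℝ (Fin E)} {m : ℝ} (hm : ∀ i, m ≤ u i) :
    0 ≤ (∑ j, u j) - E * m := by
  have := sum_le_sum fun i (_ : i ∈ univ) => hm i
  simpa using this

theorem lt_one_of_lt_one_sub {u : EuclideanSpace ℝ (Fin E)} {m lam : ℝ} (hm : ∀ i, m ≤ u i)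
    (hfull : lam < 1 - ((∑ j, u j) - E * m)) : lam < 1 := by
  linarith [sum_sub_card_mul_nonneg hm]

theorem fullActivation_mem_simplex (hE : E ≠ 0) {u : EuclideanSpace ℝ (Fin E)} {m lam : ℝ}
    (hm : ∀ i, m ≤ u i) (hfull : lam < 1 - ((∑ j, u j) - E * m)) :
    fullActivation u lam ∈ simplex E := by
  have hlam : 0 < 1 - lam := sub_pos.mpr (lt_one_of_lt_one_sub hm hfull)
  have hEpos : (0 : ℝ) < E := by positivity
  refine ⟨fun i => ?_, sum_fullActivation hE (by linarith) u⟩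
  have hcoord : fullActivation u lam i = (1 - lam + E * u i - ∑ j, u j) / (E * (1 - lam)) := by
    rw [fullActivation_apply]
    field_simp
    ring
  have hmi : E * m ≤ E * u i := mul_le_mul_of_nonneg_left (hm i) hEpos.le
  rw [hcoord]
  exact div_nonneg (by linarith) (by positivity)

end Sparsegen

open Sparsegen in
/-- Explicit formula under full activation: let `u ∈ ℝ^E` and
`λ < 1 − (U_E − E·u_(E))`.  Then the Sparsegen routing output `p*` (the unique
minimizer over the simplex) is given coordinatewise by
`p*_i = 1/E + (u_i − U_E/E)/(1 − λ)`, where `U_E = Σ_i u_(i)` and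
`u_(E) = u (σ ⟨E-1,_⟩)` is the smallest coordinate. -/
theorem full_activation_formula (E : ℕ) (hE : 1 ≤ E)
    (u : EuclideanSpace ℝ (Fin E)) (σ : Equiv.Perm (Fin E))
    (hσ : Antitone fun i => u (σ i)) (lam : ℝ)
    (hfull : lam < 1 - ((∑ j : Fin E, u (σ j)) - E * u (σ ⟨E - 1, by omega⟩)))
    (p : EuclideanSpace ℝ (Fin E)) (hp : p ∈ simplex E)
    (hmin : IsMinOn (sparsegenObj u lam) (simplex E) p) :
    ∀ i : Fin E, p i = 1 / E + (u i - (∑ j : Fin E, u (σ j)) / E) / (1 - lam) := by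
  have hlast : ∀ j, u (σ ⟨E - 1, by omega⟩) ≤ u j := fun j => by
    simpa using hσ (Fin.mk_le_mk.mpr (Nat.le_sub_one_of_lt (σ.symm j).isLt) :
      σ.symm j ≤ ⟨E - 1, by omega⟩)
  rw [Equiv.sum_comp σ u] at hfull ⊢
  have hlam := lt_one_of_lt_one_sub hlast hfull
  rw [eq_of_isMinOn_sparsegenObj hlam (fullActivation_mem_simplex (by omega) hlast hfull)
    (fun i => smul_fullActivation_sub_apply hlam.ne u i) hp hmin]
  exact fullActivation_apply u lam
end
end

section
/- (Monotonicity of sparsity in λ) For every u ∈ ℝ^E and reals λ ≤ λ' < 1, the maximal activation index is antitone in λ: k*(u, λ) ≥ k*(u, λ'), where k*(u, μ) = max{k ∈ {1,…,E} : 1 − μ + k·u_(k) > U_k}. Consequently, the number of activated experts of the Sparsegen routing output is nonincreasing in λ. -/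
/-!
For `λ < 1` the Sparsegen objective satisfies
`g(q) = g(p) + (1 - λ) ‖q - p‖² + 2 ⟪q - p, (1 - λ) p - u⟫`, so it is strongly convex and its
minimizer over the simplex is the point `p_i = max (u_i - τ) 0 / (1 - λ)` at which the linear
term is nonnegative on the simplex. With `τ = (U_{k*} - (1 - λ)) / k*` the coordinates above `τ`
are exactly the `k*` largest ones, so the minimizer has `k*(u, λ)` active experts. Finally the
condition defining `k*(u, μ)` only gets weaker as `1 - μ` grows, whence `k*(u, λ') ≤ k*(u, λ)`.
-/

noncomputable section

open Finset

variable {E : ℕ}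

def softThreshold (u : EuclideanSpace ℝ (Fin E)) (τ c : ℝ) : EuclideanSpace ℝ (Fin E) :=
  WithLp.toLp 2 fun i => max (u i - τ) 0 / c

section SoftThreshold

variable {u : EuclideanSpace ℝ (Fin E)} {τ c : ℝ}

lemma softThreshold_apply (i : Fin E) : softThreshold u τ c i = max (u i - τ) 0 / c := rfl

lemma softThreshold_nonneg (hc : 0 ≤ c) (i : Fin E) : 0 ≤ softThreshold u τ c i :=
  div_nonneg (le_max_right _ _) hc

lemma setOf_pos_softThreshold (hc : 0 < c) :
    {i | 0 < softThreshold u τ c i} = {i | τ < u i} := by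
  ext i
  simp only [Set.mem_ofPred_eq, softThreshold_apply, div_pos_iff_of_pos_right hc, lt_max_iff,
    lt_irrefl, or_false, sub_pos]

lemma sum_softThreshold (c : ℝ) :
    ∑ i, softThreshold u τ c i = (∑ i with τ < u i, (u i - τ)) / c := by
  rw [sum_filter, sum_div]
  refine sum_congr rfl fun i _ => ?_
  rw [softThreshold_apply]
  split_ifs with h
  · rw [max_eq_left (sub_pos.mpr h).le]
  · rw [max_eq_right (sub_nonpos.mpr (not_lt.mp h)), zero_div]

end SoftThreshold

lemma sparsegenObj_eq_add (u p q : EuclideanSpace ℝ (Fin E)) (lam : ℝ) :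
    sparsegenObj u lam q = sparsegenObj u lam p + (1 - lam) * ‖q - p‖ ^ 2
      + 2 * inner ℝ (q - p) ((1 - lam) • p - u) := by
  have hqu : q - u = (q - p) + (p - u) := by abel
  have hq : q = (q - p) + p := by abel
  rw [sparsegenObj, sparsegenObj, hqu, norm_add_sq_real, hq, norm_add_sq_real, ← hq]
  simp only [inner_sub_right, inner_smul_right]
  ring

/-- The first-order optimality condition of `softThreshold` over the simplex. -/
lemma inner_sub_softThreshold_nonneg {u q : EuclideanSpace ℝ (Fin E)} {τ c : ℝ} (hc : 0 < c)
    (hq : q ∈ simplex E) (hp : softThreshold u τ c ∈ simplex E) :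
    0 ≤ inner ℝ (q - softThreshold u τ c) (c • softThreshold u τ c - u) := by
  set p := softThreshold u τ c
  -- complementary slackness: `p i = 0` unless `max (u i - τ) 0 = u i - τ`
  have hcoord : ∀ i, (q i - p i) * (c * p i - u i)
      = q i * (max (u i - τ) 0 - (u i - τ)) + τ * p i - τ * q i := by
    intro i
    simp only [p, softThreshold_apply, mul_div_cancel₀ _ hc.ne']
    rcases max_cases (u i - τ) 0 with ⟨h, -⟩ | ⟨h, -⟩ <;> rw [h] <;> field_simp <;> ring
  have hslack : ∀ i, 0 ≤ q i * (max (u i - τ) 0 - (u i - τ)) := fun i =>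
    mul_nonneg (hq.1 i) (sub_nonneg.mpr (le_max_left _ _))
  calc (0 : ℝ) ≤ ∑ i, q i * (max (u i - τ) 0 - (u i - τ)) := sum_nonneg fun i _ => hslack i
    _ = ∑ i, q i * (max (u i - τ) 0 - (u i - τ)) + τ * ∑ i, p i - τ * ∑ i, q i := by
      rw [hp.2, hq.2]; ring
    _ = inner ℝ (q - p) (c • p - u) := by
      simp only [PiLp.inner_apply, PiLp.sub_apply, PiLp.smul_apply, smul_eq_mul,
        RCLike.inner_apply, conj_trivial, mul_sum, ← sum_sub_distrib, ← sum_add_distrib,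
        mul_comm _ (q.ofLp _ - _), hcoord]

lemma sparsegenObj_softThreshold_add_le {u q : EuclideanSpace ℝ (Fin E)} {τ lam : ℝ}
    (hlam : lam < 1) (hq : q ∈ simplex E) (hp : softThreshold u τ (1 - lam) ∈ simplex E) :
    sparsegenObj u lam (softThreshold u τ (1 - lam))
      + (1 - lam) * ‖q - softThreshold u τ (1 - lam)‖ ^ 2 ≤ sparsegenObj u lam q := by
  rw [sparsegenObj_eq_add u (softThreshold u τ (1 - lam)) q lam]
  have := inner_sub_softThreshold_nonneg (sub_pos.mpr hlam) hq hp
  linarith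

lemma eq_softThreshold_of_isMinOn {u p : EuclideanSpace ℝ (Fin E)} {τ lam : ℝ}
    (hlam : lam < 1) (hp₀ : softThreshold u τ (1 - lam) ∈ simplex E) (hp : p ∈ simplex E)
    (hmin : IsMinOn (sparsegenObj u lam) (simplex E) p) :
    p = softThreshold u τ (1 - lam) := by
  have hle := sparsegenObj_softThreshold_add_le hlam hp hp₀
  have hge : sparsegenObj u lam p ≤ sparsegenObj u lam (softThreshold u τ (1 - lam)) := hmin hp₀
  have hsq : ‖p - softThreshold u τ (1 - lam)‖ ^ 2 ≤ 0 :=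
    le_of_mul_le_mul_left (by linarith) (sub_pos.mpr hlam)
  exact sub_eq_zero.mp (norm_eq_zero.mp (pow_eq_zero_iff two_ne_zero |>.mp
    (le_antisymm hsq (sq_nonneg _))))

section Sorted

variable {u : EuclideanSpace ℝ (Fin E)} {σ : Equiv.Perm (Fin E)} {c : ℝ} {k : Fin E}

lemma sortedPartialSum_of_val_eq_succ {j : Fin E} (hj : (j : ℕ) = k + 1) :
    sortedPartialSum u σ j = sortedPartialSum u σ k + u (σ j) := by
  have hIic : Iic j = insert j (Iic k) := by
    ext x
    simp only [mem_Iic, mem_insert, Fin.le_def, Fin.ext_iff]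
    omega
  rw [sortedPartialSum, hIic, sum_insert (by simp [Fin.le_def, hj]), add_comm]
  rfl

/-- The paper's threshold `(U_k - c) / k`, with its 1-based `k` written as `k + 1`. -/
def sortedThreshold (u : EuclideanSpace ℝ (Fin E)) (σ : Equiv.Perm (Fin E)) (c : ℝ) (k : Fin E) :
    ℝ :=
  (sortedPartialSum u σ k - c) / ((k : ℕ) + 1)

lemma sortedThreshold_lt_iff (hσ : Antitone fun i => u (σ i))
    (hmem : sortedPartialSum u σ k < c + ((k : ℕ) + 1) * u (σ k))
    (hmax : ∀ j : Fin E, sortedPartialSum u σ j < c + ((j : ℕ) + 1) * u (σ j) → j ≤ k)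
    (i : Fin E) : sortedThreshold u σ c k < u (σ i) ↔ i ≤ k := by
  rw [sortedThreshold, div_lt_iff₀ (by positivity)]
  constructor
  · intro hi
    by_contra! hki
    set j : Fin E := ⟨k + 1, lt_of_le_of_lt hki i.isLt⟩
    have hj : (j : ℕ) = k + 1 := rfl
    have hnot : ¬ sortedPartialSum u σ j < c + ((j : ℕ) + 1) * u (σ j) := fun h =>
      absurd (hmax j h) (by simp [Fin.le_def, hj])
    have hji : u (σ i) ≤ u (σ j) := hσ (Fin.le_def.mpr (by omega))
    rw [sortedPartialSum_of_val_eq_succ hj, hj] at hnot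
    push_cast at hnot
    nlinarith
  · intro hik
    have : u (σ k) ≤ u (σ i) := hσ hik
    nlinarith

lemma sum_softThreshold_sortedThreshold (hσ : Antitone fun i => u (σ i)) (hc : 0 < c)
    (hmem : sortedPartialSum u σ k < c + ((k : ℕ) + 1) * u (σ k))
    (hmax : ∀ j : Fin E, sortedPartialSum u σ j < c + ((j : ℕ) + 1) * u (σ j) → j ≤ k) :
    ∑ i, softThreshold u (sortedThreshold u σ c k) c i = 1 := by
  have hsum : ∑ i with sortedThreshold u σ c k < u i, (u i - sortedThreshold u σ c k)
      = ∑ j ∈ Iic k, (u (σ j) - sortedThreshold u σ c k) :=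
    (sum_equiv σ (fun j => by simp [sortedThreshold_lt_iff hσ hmem hmax]) fun _ _ => rfl).symm
  rw [sum_softThreshold, hsum, sum_sub_distrib, sum_const, Fin.card_Iic, nsmul_eq_mul,
    sortedThreshold, div_eq_one_iff_eq hc.ne']
  push_cast
  field_simp
  rw [sortedPartialSum]
  ring

lemma ncard_setOf_pos_softThreshold_sortedThreshold (hσ : Antitone fun i => u (σ i))
    (hc : 0 < c) (hmem : sortedPartialSum u σ k < c + ((k : ℕ) + 1) * u (σ k))
    (hmax : ∀ j : Fin E, sortedPartialSum u σ j < c + ((j : ℕ) + 1) * u (σ j) → j ≤ k) :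
    {i | 0 < softThreshold u (sortedThreshold u σ c k) c i}.ncard = (k : ℕ) + 1 := by
  have himage : {i | sortedThreshold u σ c k < u i} = σ '' Set.Iic k := by
    ext i
    rw [← σ.apply_symm_apply i, Set.mem_ofPred_eq, sortedThreshold_lt_iff hσ hmem hmax,
      Set.mem_image_equiv]
    simp
  rw [setOf_pos_softThreshold hc, himage, Set.ncard_image_of_injective _ σ.injective,
    ← coe_Iic, Set.ncard_coe_finset, Fin.card_Iic]

end Sorted

lemma ncard_support_of_isMinOn {u p : EuclideanSpace ℝ (Fin E)} {σ : Equiv.Perm (Fin E)}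
    (hσ : Antitone fun i => u (σ i)) {lam : ℝ} (hlam : lam < 1) {k : Fin E}
    (hmem : sortedPartialSum u σ k < 1 - lam + ((k : ℕ) + 1) * u (σ k))
    (hmax : ∀ j : Fin E, sortedPartialSum u σ j < 1 - lam + ((j : ℕ) + 1) * u (σ j) → j ≤ k)
    (hp : p ∈ simplex E) (hmin : IsMinOn (sparsegenObj u lam) (simplex E) p) :
    {i | 0 < p i}.ncard = (k : ℕ) + 1 := by
  have hc : 0 < 1 - lam := sub_pos.mpr hlam
  have hp₀ : softThreshold u (sortedThreshold u σ (1 - lam) k) (1 - lam) ∈ simplex E :=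
    ⟨softThreshold_nonneg hc.le, sum_softThreshold_sortedThreshold hσ hc hmem hmax⟩
  rw [eq_softThreshold_of_isMinOn hlam hp₀ hp hmin,
    ncard_setOf_pos_softThreshold_sortedThreshold hσ hc hmem hmax]

theorem kstar_antitone_general (E : ℕ)
    (u : EuclideanSpace ℝ (Fin E)) (σ : Equiv.Perm (Fin E))
    (hσ : Antitone fun i => u (σ i))
    (lam lam' : ℝ) (h1 : lam ≤ lam') (h2 : lam' < 1)
    (kstar : Fin E)
    (hmem : 1 - lam + ((kstar : ℕ) + 1) * u (σ kstar) > sortedPartialSum u σ kstar)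
    (hmax : ∀ k : Fin E,
      (1 - lam + ((k : ℕ) + 1) * u (σ k) > sortedPartialSum u σ k) → k ≤ kstar)
    (kstar' : Fin E)
    (hmem' : 1 - lam' + ((kstar' : ℕ) + 1) * u (σ kstar') > sortedPartialSum u σ kstar')
    (hmax' : ∀ k : Fin E,
      (1 - lam' + ((k : ℕ) + 1) * u (σ k) > sortedPartialSum u σ k) → k ≤ kstar')
    (p p' : EuclideanSpace ℝ (Fin E))
    (hp : p ∈ simplex E) (hmin : IsMinOn (sparsegenObj u lam) (simplex E) p)
    (hp' : p' ∈ simplex E) (hmin' : IsMinOn (sparsegenObj u lam') (simplex E) p') :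
    kstar' ≤ kstar ∧
    {i : Fin E | 0 < p' i}.ncard ≤ {i : Fin E | 0 < p i}.ncard := by
  have hk : kstar' ≤ kstar := hmax kstar' (by linarith)
  refine ⟨hk, ?_⟩
  rw [ncard_support_of_isMinOn hσ (h1.trans_lt h2) hmem hmax hp hmin,
    ncard_support_of_isMinOn hσ h2 hmem' hmax' hp' hmin']
  exact Nat.succ_le_succ (Fin.le_def.mp hk)

/-- Monotonicity of sparsity in `λ`: for `λ ≤ λ' < 1`, the maximal activation index
is antitone in `λ`: `k*(u, λ) ≥ k*(u, λ')` (here `kstar, kstar' : Fin E` are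
characterized as the maxima of the respective condition sets).  Consequently, the
number of activated experts of the Sparsegen routing output (the unique minimizer
over the simplex) is nonincreasing in `λ`. -/
theorem kstar_antitone (E : ℕ) (hE : 1 ≤ E)
    (u : EuclideanSpace ℝ (Fin E)) (σ : Equiv.Perm (Fin E))
    (hσ : Antitone fun i => u (σ i))
    (lam lam' : ℝ) (h1 : lam ≤ lam') (h2 : lam' < 1)
    (kstar : Fin E)
    (hmem : 1 - lam + ((kstar : ℕ) + 1) * u (σ kstar) > sortedPartialSum u σ kstar)
    (hmax : ∀ k : Fin E,
      (1 - lam + ((k : ℕ) + 1) * u (σ k) > sortedPartialSum u σ k) → k ≤ kstar)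
    (kstar' : Fin E)
    (hmem' : 1 - lam' + ((kstar' : ℕ) + 1) * u (σ kstar') > sortedPartialSum u σ kstar')
    (hmax' : ∀ k : Fin E,
      (1 - lam' + ((k : ℕ) + 1) * u (σ k) > sortedPartialSum u σ k) → k ≤ kstar')
    (p p' : EuclideanSpace ℝ (Fin E))
    (hp : p ∈ simplex E) (hmin : IsMinOn (sparsegenObj u lam) (simplex E) p)
    (hp' : p' ∈ simplex E) (hmin' : IsMinOn (sparsegenObj u lam') (simplex E) p') :
    kstar' ≤ kstar ∧
    {i : Fin E | 0 < p' i}.ncard ≤ {i : Fin E | 0 < p i}.ncard :=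
  kstar_antitone_general E u σ hσ lam lam' h1 h2 kstar hmem hmax kstar' hmem' hmax' p p' hp hmin hp'
    hmin'
end
end

section
/- (One-hot regime as λ → 1⁻) Let u ∈ ℝ^E with E ≥ 2 and suppose u has a strict unique maximum: u_(1) > u_(2), attained at the index j = σ(1). Then for every λ with 1 − (u_(1) − u_(2)) ≤ λ < 1, the Sparsegen routing output sparsegen(u, λ) equals the one-hot vector e_j (the vector with j-th coordinate 1 and all other coordinates 0). -/
noncomputable section

lemma mynorm_sq {E : ℕ} (x : EuclideanSpace ℝ (Fin E)) : ‖x‖ ^ 2 = ∑ i, x i ^ 2 := by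
  rw [EuclideanSpace.norm_eq, Real.sq_sqrt (by positivity)]
  simp [Real.norm_eq_abs, sq_abs]

lemma mysub_apply {E : ℕ} (x y : EuclideanSpace ℝ (Fin E)) (i : Fin E) :
    (x - y) i = x i - y i := rfl

lemma expand_sq {E : ℕ} (a b : Fin E → ℝ) :
    ∑ i, (a i - b i) ^ 2 = ∑ i, a i ^ 2 - 2 * ∑ i, a i * b i + ∑ i, b i ^ 2 := by
  rw [Finset.mul_sum, ← Finset.sum_sub_distrib, ← Finset.sum_add_distrib]
  apply Finset.sum_congr rfl
  intro i _
  ring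

/-- One-hot regime as `λ → 1⁻`: let `u ∈ ℝ^E` with `E ≥ 2` and a strict unique
maximum `u_(1) > u_(2)` attained at `j = σ(1)`.  Then for every
`1 − (u_(1) − u_(2)) ≤ λ < 1`, the Sparsegen routing output (the unique minimizer
over the simplex) equals the one-hot vector `e_j`. -/
theorem sparsegen_one_hot (E : ℕ) (hE : 2 ≤ E)
    (u : EuclideanSpace ℝ (Fin E)) (σ : Equiv.Perm (Fin E))
    (hσ : Antitone fun i => u (σ i))
    (hstrict : u (σ ⟨1, by omega⟩) < u (σ ⟨0, by omega⟩))
    (lam : ℝ)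
    (hlow : 1 - (u (σ ⟨0, by omega⟩) - u (σ ⟨1, by omega⟩)) ≤ lam) (hlam : lam < 1)
    (p : EuclideanSpace ℝ (Fin E)) (hp : p ∈ simplex E)
    (hmin : IsMinOn (sparsegenObj u lam) (simplex E) p) :
    ∀ i : Fin E, p i = if i = σ ⟨0, by omega⟩ then 1 else 0 := by
  have h0 : (0 : ℕ) < E := by omega
  have h1 : (1 : ℕ) < E := by omega
  set j : Fin E := σ ⟨0, h0⟩ with hj
  set s : Fin E := σ ⟨1, h1⟩ with hs
  obtain ⟨hpnn, hpsum⟩ := hp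
  -- the candidate one-hot vector
  set q : EuclideanSpace ℝ (Fin E) := EuclideanSpace.single j (1 : ℝ) with hqdef
  have hqapp : ∀ i, q i = if i = j then 1 else 0 := by
    intro i; simp [hqdef, EuclideanSpace.single_apply]
  have hqsimplex : q ∈ simplex E := by
    constructor
    · intro i; rw [hqapp]; positivity
    · simp [hqapp]
  have hle : sparsegenObj u lam p ≤ sparsegenObj u lam q := hmin hqsimplex
  -- expand the objective
  have hexp : ∀ x : EuclideanSpace ℝ (Fin E),
      sparsegenObj u lam x =
        (∑ i, x i ^ 2) - 2 * (∑ i, x i * u i) + (∑ i, u i ^ 2)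
          - lam * ∑ i, x i ^ 2 := by
    intro x
    unfold sparsegenObj
    rw [mynorm_sq, mynorm_sq]
    simp only [mysub_apply]
    rw [expand_sq]
  have hq2 : ∑ i, q i ^ 2 = 1 := by simp [hqapp]
  have hqu : ∑ i, q i * u i = u j := by
    simp only [hqapp, ite_mul, one_mul, zero_mul]
    rw [Finset.sum_ite_eq' Finset.univ j u]
    simp
  -- bounds on p
  have hpj1 : p j ≤ 1 := by
    rw [← hpsum]
    exact Finset.single_le_sum (fun i _ => hpnn i) (Finset.mem_univ j)
  have hS2 : p j ^ 2 ≤ ∑ i, p i ^ 2 :=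
    Finset.single_le_sum (fun i _ => sq_nonneg (p i)) (Finset.mem_univ j)
  -- u i ≤ u s for i ≠ j
  have hui : ∀ i : Fin E, i ≠ j → u i ≤ u s := by
    intro i hij
    have hk : σ (σ.symm i) = i := σ.apply_symm_apply i
    have hk0 : σ.symm i ≠ ⟨0, h0⟩ := by
      intro h; apply hij; rw [← hk, h]
    have h1k : (⟨1, h1⟩ : Fin E) ≤ σ.symm i := by
      have : (σ.symm i).val ≠ 0 := fun h => hk0 (Fin.ext h)
      exact Fin.mk_le_of_le_val (by omega)
    have h2 : u (σ (σ.symm i)) ≤ u (σ ⟨1, h1⟩) := hσ h1k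
    rw [hk] at h2
    exact h2
  -- linear bound
  have hlin : ∑ i, p i * u i ≤ u s + p j * (u j - u s) := by
    have : ∀ i : Fin E, i ∈ Finset.univ →
        p i * u i ≤ p i * u s + (if i = j then p i * (u j - u s) else 0) := by
      intro i _
      by_cases hij : i = j
      · rw [if_pos hij, hij]
        have : p j * u s + p j * (u j - u s) = p j * u j := by ring
        linarith
      · simp only [hij, if_false]
        have := mul_le_mul_of_nonneg_left (hui i hij) (hpnn i)
        linarith
    calc ∑ i, p i * u i ≤ ∑ i, (p i * u s + if i = j then p i * (u j - u s) else 0) :=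
          Finset.sum_le_sum this
      _ = u s + p j * (u j - u s) := by
          rw [Finset.sum_add_distrib, ← Finset.sum_mul, hpsum, Finset.sum_ite_eq'
            Finset.univ j (fun i => p i * (u j - u s))]
          simp
  -- conclude p j = 1
  have hδ : 1 - lam ≤ u j - u s := by linarith
  have hc : 0 < 1 - lam := by linarith
  have hpj : p j = 1 := by
    by_contra hne
    have hlt : p j < 1 := lt_of_le_of_ne hpj1 hne
    rw [hexp p, hexp q, hq2, hqu] at hle
    nlinarith [mul_pos hc (sub_pos.mpr hlt), sub_pos.mpr hlt, hpnn j,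
      mul_nonneg (le_of_lt hc) (mul_nonneg (sub_nonneg.mpr hpj1) (hpnn j))]
  -- others are zero
  intro i
  by_cases hij : i = j
  · rw [if_pos hij, hij]
    exact hpj
  · simp only [hij, if_false]
    have hsum' : ∑ k ∈ Finset.univ.erase j, p k = 0 := by
      have := Finset.add_sum_erase Finset.univ p (Finset.mem_univ j)
      rw [hpsum] at this
      linarith [this, hpj]
    have := (Finset.sum_eq_zero_iff_of_nonneg (fun k _ => hpnn k)).mp hsum'
    exact this i (Finset.mem_erase.mpr ⟨hij, Finset.mem_univ i⟩)
end
end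

section
/- (Stability of Sparsegen routing) Fix a real λ < 1. The map u ↦ sparsegen(u, λ) from ℝ^E to the probability simplex Δ is Lipschitz continuous with constant 1/(1 − λ) with respect to the Euclidean norm: for all u, v ∈ ℝ^E, ‖sparsegen(u, λ) − sparsegen(v, λ)‖₂ ≤ ‖u − v‖₂/(1 − λ). -/
noncomputable section

open RealInnerProductSpace

lemma simplex_seg_mem {E : ℕ} {x y : EuclideanSpace ℝ (Fin E)}
    (hx : x ∈ simplex E) (hy : y ∈ simplex E) {t : ℝ} (ht0 : 0 ≤ t) (ht1 : t ≤ 1) :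
    x + t • (y - x) ∈ simplex E := by
  obtain ⟨hx0, hx1⟩ := hx
  obtain ⟨hy0, hy1⟩ := hy
  constructor
  · intro i
    have : (x + t • (y - x)) i = (1 - t) * x i + t * y i := by
      simp [PiLp.add_apply, PiLp.smul_apply, PiLp.sub_apply, smul_eq_mul]; ring
    rw [this]
    have := hx0 i
    have := hy0 i
    nlinarith
  · have : ∀ i, (x + t • (y - x)) i = x i + t * (y i - x i) := by
      intro i; simp [PiLp.add_apply, PiLp.smul_apply, PiLp.sub_apply, smul_eq_mul]
    simp only [this, Finset.sum_add_distrib, ← Finset.mul_sum, Finset.sum_sub_distrib,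
      hx1, hy1]
    ring

lemma obj_expand {E : ℕ} (u p d : EuclideanSpace ℝ (Fin E)) (lam t : ℝ) :
    sparsegenObj u lam (p + t • d) =
      sparsegenObj u lam p + t * (2 * (1 - lam) * ⟪p, d⟫ - 2 * ⟪u, d⟫)
        + t ^ 2 * (1 - lam) * ‖d‖ ^ 2 := by
  have h1 : p + t • d - u = (p - u) + t • d := by abel
  unfold sparsegenObj
  rw [h1, norm_add_sq_real, norm_add_sq_real, norm_smul, inner_sub_left,
    real_inner_smul_right, real_inner_smul_right]
  simp only [Real.norm_eq_abs, mul_pow, sq_abs]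
  ring

/-- Stability of Sparsegen routing: fix `λ < 1`.  The map `u ↦ sparsegen(u, λ)`
(whose value at `u` is the unique minimizer of the objective over the simplex) is
Lipschitz with constant `1/(1 − λ)` in the Euclidean norm: for all `u, v`,
`‖sparsegen(u, λ) − sparsegen(v, λ)‖ ≤ ‖u − v‖/(1 − λ)`. -/
theorem sparsegen_lipschitz (E : ℕ) (hE : 1 ≤ E) (lam : ℝ) (hlam : lam < 1)
    (u v : EuclideanSpace ℝ (Fin E))
    (p : EuclideanSpace ℝ (Fin E)) (hp : p ∈ simplex E)
    (hpmin : IsMinOn (sparsegenObj u lam) (simplex E) p)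
    (q : EuclideanSpace ℝ (Fin E)) (hq : q ∈ simplex E)
    (hqmin : IsMinOn (sparsegenObj v lam) (simplex E) q) :
    ‖p - q‖ ≤ ‖u - v‖ / (1 - lam) := by
  set c : ℝ := 1 - lam with hc
  have hcpos : 0 < c := by simp [hc]; linarith
  set d : EuclideanSpace ℝ (Fin E) := q - p with hd
  -- key: for all t ∈ (0,1], c‖d‖²(1-t) ≤ -⟪u-v,d⟫
  have key : ∀ t : ℝ, 0 < t → t ≤ 1 → c * ‖d‖ ^ 2 * (1 - t) ≤ -⟪u - v, d⟫ := by
    intro t ht0 ht1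
    have h1 : sparsegenObj u lam p ≤ sparsegenObj u lam (p + t • d) :=
      hpmin (simplex_seg_mem hp hq ht0.le ht1)
    have h2 : sparsegenObj v lam q ≤ sparsegenObj v lam (q + t • (-d)) := by
      have : q + t • (-d) = q + t • (p - q) := by rw [hd]; abel_nf
      rw [this]
      exact hqmin (simplex_seg_mem hq hp ht0.le ht1)
    rw [obj_expand] at h1 h2
    rw [← hc] at h1 h2
    have e1 : 0 ≤ t * (2 * c * ⟪p, d⟫ - 2 * ⟪u, d⟫) + t ^ 2 * c * ‖d‖ ^ 2 := by
      linarith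
    have e2 : 0 ≤ t * (2 * c * ⟪q, -d⟫ - 2 * ⟪v, -d⟫) + t ^ 2 * c * ‖-d‖ ^ 2 := by
      linarith
    have hqd : ⟪q, -d⟫ = -⟪q, d⟫ := by rw [inner_neg_right]
    have hvd : ⟪v, -d⟫ = -⟪v, d⟫ := by rw [inner_neg_right]
    rw [hqd, hvd, norm_neg] at e2
    have hsum : 0 ≤ t * (2 * c * ⟪p - q, d⟫ - 2 * ⟪u - v, d⟫) + 2 * t ^ 2 * c * ‖d‖ ^ 2 := by
      rw [inner_sub_left, inner_sub_left]
      nlinarith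
    have hpq : ⟪p - q, d⟫ = -‖d‖ ^ 2 := by
      rw [hd]
      have : p - q = -(q - p) := by abel
      rw [this, inner_neg_left, real_inner_self_eq_norm_sq]
    rw [hpq] at hsum
    -- 0 ≤ t*(-2c‖d‖² - 2⟪u-v,d⟫) + 2t²c‖d‖²; divide by 2t
    nlinarith [hsum, ht0]
  have cs : -⟪u - v, d⟫ ≤ ‖u - v‖ * ‖d‖ := by
    have := abs_real_inner_le_norm (u - v) d
    have := neg_abs_le ⟪u - v, d⟫
    linarith
  have main : c * ‖d‖ ^ 2 ≤ ‖u - v‖ * ‖d‖ := by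
    apply le_of_forall_pos_le_add
    intro ε hε
    set t : ℝ := min 1 (ε / (c * ‖d‖ ^ 2 + 1)) with htdef
    have hden : 0 < c * ‖d‖ ^ 2 + 1 := by positivity
    have ht0 : 0 < t := lt_min one_pos (div_pos hε hden)
    have ht1 : t ≤ 1 := min_le_left _ _
    have hke := (key t ht0 ht1).trans cs
    have htε : t * (c * ‖d‖ ^ 2 + 1) ≤ ε := by
      have : t ≤ ε / (c * ‖d‖ ^ 2 + 1) := min_le_right _ _
      calc t * (c * ‖d‖ ^ 2 + 1) ≤ ε / (c * ‖d‖ ^ 2 + 1) * (c * ‖d‖ ^ 2 + 1) := by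
            apply mul_le_mul_of_nonneg_right this hden.le
        _ = ε := div_mul_cancel₀ _ hden.ne'
    nlinarith [sq_nonneg (‖d‖), hcpos, ht0]
  have hpqd : ‖p - q‖ = ‖d‖ := by rw [hd, ← norm_neg]; congr 1; abel
  rw [hpqd, le_div_iff₀ hcpos]
  rcases eq_or_lt_of_le (norm_nonneg d) with h0 | h0
  · rw [← h0]; simpa using norm_nonneg (u - v)
  · nlinarith [main, h0, hcpos, norm_nonneg (u - v)]
end
end

section
/- (Order preservation of Sparsegen routing) For every u ∈ ℝ^E, every real λ < 1, and all indices i, j ∈ {1,…,E}: if u_i ≥ u_j then the Sparsegen routing output p* = sparsegen(u, λ) satisfies p*_i ≥ p*_j, and if u_i = u_j then p*_i = p*_j. -/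
noncomputable section

/-!
Swapping the coordinates `i` and `j` is an isometry that preserves the simplex and changes the
objective by `2 (u_i - u_j) (p_i - p_j)`, so minimality of `p` makes this product nonnegative.
If `u_i = u_j`, the swapped point is therefore another minimizer; for `λ < 1` the objective is
`2 (1 - λ)`-strongly convex, so the minimizer is unique and `p_i = p_j`.
-/

open Finset
open scoped InnerProductSpace

theorem convex_simplex (E : ℕ) : Convex ℝ (simplex E) :=
  (convex_stdSimplex ℝ (Fin E)).linear_preimage (WithLp.linearEquiv 2 ℝ (Fin E → ℝ)).toLinearMap

theorem sparsegenObj_eq_inner {E : ℕ} (u : EuclideanSpace ℝ (Fin E)) (lam : ℝ)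
    (p : EuclideanSpace ℝ (Fin E)) :
    sparsegenObj u lam p = (1 - lam) * ‖p‖ ^ 2 - 2 * ⟪p, u⟫_ℝ + ‖u‖ ^ 2 := by
  rw [sparsegenObj, norm_sub_sq_real]
  ring

theorem strongConvexOn_sparsegenObj {E : ℕ} (u : EuclideanSpace ℝ (Fin E)) (lam : ℝ) :
    StrongConvexOn Set.univ (2 * (1 - lam)) (sparsegenObj u lam) := by
  rw [strongConvexOn_iff_convex]
  have h : (fun p => sparsegenObj u lam p - 2 * (1 - lam) / 2 * ‖p‖ ^ 2)
      = fun p => innerₗ _ (-(2 : ℝ) • u) p + ‖u‖ ^ 2 := by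
    funext p
    rw [sparsegenObj_eq_inner, innerₗ_apply_apply, real_inner_smul_left, real_inner_comm]
    ring
  rw [h]
  exact ((innerₗ _ (-(2 : ℝ) • u)).convexOn convex_univ).add_const _

theorem piLpCongrLeft_mem_simplex {E : ℕ} (σ : Equiv.Perm (Fin E))
    {p : EuclideanSpace ℝ (Fin E)} (hp : p ∈ simplex E) :
    LinearIsometryEquiv.piLpCongrLeft 2 ℝ ℝ σ p ∈ simplex E := by
  refine ⟨fun k => hp.1 _, ?_⟩
  simp only [LinearIsometryEquiv.piLpCongrLeft_apply, Equiv.piCongrLeft'_apply]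
  rw [Equiv.sum_comp σ.symm (fun k => p k)]
  exact hp.2

theorem sparsegenObj_swap {E : ℕ} (u : EuclideanSpace ℝ (Fin E)) (lam : ℝ)
    (p : EuclideanSpace ℝ (Fin E)) {i j : Fin E} (hij : i ≠ j) :
    sparsegenObj u lam (LinearIsometryEquiv.piLpCongrLeft 2 ℝ ℝ (Equiv.swap i j) p)
      = sparsegenObj u lam p + 2 * (u i - u j) * (p i - p j) := by
  have hinner : ⟪LinearIsometryEquiv.piLpCongrLeft 2 ℝ ℝ (Equiv.swap i j) p, u⟫_ℝ - ⟪p, u⟫_ℝ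
      = (p j - p i) * (u i - u j) := by
    simp only [PiLp.inner_apply, ← sum_sub_distrib]
    rw [Fintype.sum_eq_add i j hij]
    · simp only [LinearIsometryEquiv.piLpCongrLeft_apply, Equiv.piCongrLeft'_apply,
        Equiv.symm_swap, Equiv.swap_apply_left, Equiv.swap_apply_right, RCLike.inner_apply,
        Real.ringHom_apply]
      ring
    · intro k hk
      simp [Equiv.swap_apply_of_ne_of_ne hk.1 hk.2]
  rw [sparsegenObj_eq_inner, sparsegenObj_eq_inner, LinearIsometryEquiv.norm_map]
  linear_combination (-2) * hinner

theorem strictConvexOn_sparsegenObj_simplex {E : ℕ} (u : EuclideanSpace ℝ (Fin E)) {lam : ℝ}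
    (hlam : lam < 1) : StrictConvexOn ℝ (simplex E) (sparsegenObj u lam) :=
  ((strongConvexOn_sparsegenObj u lam).strictConvexOn (by linarith)).subset
    (Set.subset_univ _) (convex_simplex E)

theorem sparsegen_order_preserving_general (E : ℕ)
    (u : EuclideanSpace ℝ (Fin E)) (lam : ℝ) (hlam : lam < 1)
    (p : EuclideanSpace ℝ (Fin E)) (hp : p ∈ simplex E)
    (hmin : IsMinOn (sparsegenObj u lam) (simplex E) p)
    (i j : Fin E) :
    (u j ≤ u i → p j ≤ p i) ∧ (u i = u j → p i = p j) := by
  obtain rfl | hij := eq_or_ne i j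
  · simp
  set q := LinearIsometryEquiv.piLpCongrLeft 2 ℝ ℝ (Equiv.swap i j) p
  have hq : q ∈ simplex E := piLpCongrLeft_mem_simplex _ hp
  have hq_obj : sparsegenObj u lam q = sparsegenObj u lam p + 2 * (u i - u j) * (p i - p j) :=
    sparsegenObj_swap u lam p hij
  have hprod : 0 ≤ (u i - u j) * (p i - p j) := by linarith [isMinOn_iff.mp hmin q hq]
  have htie : u i = u j → p i = p j := by
    intro huij
    have hq_min : IsMinOn (sparsegenObj u lam) (simplex E) q := by
      rw [isMinOn_iff, hq_obj, huij, sub_self, mul_zero, zero_mul, add_zero]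
      exact isMinOn_iff.mp hmin
    have hqp : q = p :=
      (strictConvexOn_sparsegenObj_simplex u hlam).eq_of_isMinOn hq_min hmin hq hp
    simpa [q] using congrArg (· j) hqp
  refine ⟨fun hji => ?_, htie⟩
  rcases hji.lt_or_eq with hlt | heq
  · exact sub_nonneg.mp (nonneg_of_mul_nonneg_right hprod (sub_pos.mpr hlt))
  · exact (htie heq.symm).ge

/-- Order preservation of Sparsegen routing: for every `u ∈ ℝ^E`, `λ < 1` and all
indices `i, j`: if `u_i ≥ u_j` then the Sparsegen routing output `p*` (the unique
minimizer over the simplex) satisfies `p*_i ≥ p*_j`, and if `u_i = u_j` then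
`p*_i = p*_j`. -/
theorem sparsegen_order_preserving (E : ℕ) (hE : 1 ≤ E)
    (u : EuclideanSpace ℝ (Fin E)) (lam : ℝ) (hlam : lam < 1)
    (p : EuclideanSpace ℝ (Fin E)) (hp : p ∈ simplex E)
    (hmin : IsMinOn (sparsegenObj u lam) (simplex E) p)
    (i j : Fin E) :
    (u j ≤ u i → p j ≤ p i) ∧ (u i = u j → p i = p j) :=
  sparsegen_order_preserving_general E u lam hlam p hp hmin i j
end
end
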